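/- arXiv:math/0511581 — 4 statements merged into one kernel-verified Lean document; each statement's English description precedes it below -/
import Mathlib

section
/- Let p ≥ 1 be an integer and α ≠ 0 a real number. Suppose x₀ : ℝ → ℝ is continuous with inf_{t∈ℝ} |x₀(t) − α| bounded so that |x₀(t)| ≥ δ > 0 for all t and sup_t |x₀(t)| ≤ M. Define P(ξ,t) = (2p+1)∫₀¹ (x₀(t)+sξ)^{2p} ds and Q(ξ) = (2p+1)∫₀¹ (α+sξ)^{2p} ds, and R(ξ,t) = P(ξ,t)/Q(ξ). Then there exist positive constants R₁ and R₂ such that R₁ < R(ξ,t) < R₂ for all ξ ∈ ℝ and t ∈ ℝ. -/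
/-!
`(n + 1) ∫₀¹ (x + sξ)ⁿ ds` is the geometric sum `∑ᵢ (x + ξ)ⁱ xⁿ⁻ⁱ`, the divided difference of
`t ↦ tⁿ⁺¹` between `x` and `x + ξ`. For even `n` this sum lies between `(xⁿ + (x + ξ)ⁿ) / 2` and
`(n + 1) (xⁿ + (x + ξ)ⁿ)`, so up to constants depending only on `n` it is comparable to `xⁿ + ξⁿ`.
Since `δ ≤ |x₀ t| ≤ M`, the quantity `x₀(t)ⁿ + ξⁿ` is comparable to `αⁿ + ξⁿ` uniformly in `ξ`
and `t`, which bounds the quotient `R(ξ, t)` above and away from zero.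
-/

open Finset

lemma Even.pow_le_pow_of_abs_le {n : ℕ} (hn : Even n) {a b : ℝ} (h : |a| ≤ |b|) :
    a ^ n ≤ b ^ n := by
  rw [← hn.pow_abs a, ← hn.pow_abs b]
  exact pow_le_pow_left₀ (abs_nonneg a) h n

lemma Even.pow_add_add_pow_le {n : ℕ} (hn : Even n) (a b : ℝ) :
    a ^ n + (a + b) ^ n ≤ 2 ^ (n + 1) * (a ^ n + b ^ n) := by
  have hpred : (2 : ℝ) ^ (n - 1) ≤ 2 ^ n := pow_le_pow_right₀ one_le_two (Nat.sub_le n 1)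
  have hone : (1 : ℝ) ≤ 2 ^ n := one_le_pow₀ one_le_two
  have ha := hn.pow_nonneg a
  have hb := hn.pow_nonneg b
  calc a ^ n + (a + b) ^ n ≤ 2 ^ n * (a ^ n + b ^ n) + 2 ^ n * (a ^ n + b ^ n) := by
        gcongr
        · nlinarith
        · exact hn.add_pow_le.trans (by gcongr)
    _ = 2 ^ (n + 1) * (a ^ n + b ^ n) := by ring

lemma Even.sq_sub_sq_mul_pow_sub_pow_nonneg {n : ℕ} (hn : Even n) (a b : ℝ) :
    0 ≤ (b ^ 2 - a ^ 2) * (b ^ n - a ^ n) := by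
  rcases le_total |a| |b| with h | h
  · exact mul_nonneg (sub_nonneg.2 (sq_le_sq.2 h)) (sub_nonneg.2 (hn.pow_le_pow_of_abs_le h))
  · exact mul_nonneg_of_nonpos_of_nonpos (sub_nonpos.2 (sq_le_sq.2 h))
      (sub_nonpos.2 (hn.pow_le_pow_of_abs_le h))

lemma Even.pow_add_pow_le_two_mul_geom_sum {n : ℕ} (hn : Even n) (a b : ℝ) :
    a ^ n + b ^ n ≤ 2 * ∑ i ∈ range (n + 1), b ^ i * a ^ (n - i) := by
  rcases eq_or_ne b a with rfl | hba
  · have (i) (hi : i ∈ range (n + 1)) : b ^ i * b ^ (n - i) = b ^ n := by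
      rw [← pow_add, Nat.add_sub_cancel' (Nat.lt_succ_iff.mp (mem_range.mp hi))]
    rw [sum_congr rfl this, sum_const, card_range, nsmul_eq_mul]
    have := hn.pow_nonneg b
    have : (1 : ℝ) ≤ (n + 1 : ℕ) := by norm_cast; omega
    nlinarith
  · have key := geom_sum₂_mul b a (n + 1)
    simp only [add_tsub_cancel_right] at key
    have hsq : 0 < (b - a) ^ 2 := by positivity [sub_ne_zero.2 hba]
    -- since `(∑ ...) * (b - a) = bⁿ⁺¹ - aⁿ⁺¹`, the defect times `(b - a)²` is `(b² - a²)(bⁿ - aⁿ)`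
    have hsign : 0 ≤ (2 * ∑ i ∈ range (n + 1), b ^ i * a ^ (n - i) - (a ^ n + b ^ n)) *
        (b - a) ^ 2 := by
      convert hn.sq_sub_sq_mul_pow_sub_pow_nonneg a b using 1
      linear_combination 2 * (b - a) * key
    linarith [(mul_nonneg_iff_of_pos_right hsq).1 hsign]

lemma pow_mul_pow_le_pow_add_pow {x y : ℝ} (hx : 0 ≤ x) (hy : 0 ≤ y) {i n : ℕ} (hi : i ≤ n) :
    x ^ i * y ^ (n - i) ≤ x ^ n + y ^ n := by
  rcases le_total x y with h | h
  · calc x ^ i * y ^ (n - i) ≤ y ^ i * y ^ (n - i) := by gcongr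
      _ = y ^ n := by rw [← pow_add, Nat.add_sub_cancel' hi]
      _ ≤ x ^ n + y ^ n := le_add_of_nonneg_left (pow_nonneg hx n)
  · calc x ^ i * y ^ (n - i) ≤ x ^ i * x ^ (n - i) := by gcongr
      _ = x ^ n := by rw [← pow_add, Nat.add_sub_cancel' hi]
      _ ≤ x ^ n + y ^ n := le_add_of_nonneg_right (pow_nonneg hy n)

lemma Even.geom_sum_le_mul_pow_add_pow {n : ℕ} (hn : Even n) (a b : ℝ) :
    ∑ i ∈ range (n + 1), b ^ i * a ^ (n - i) ≤ (n + 1) * (a ^ n + b ^ n) := by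
  have hterm (i) (hi : i ∈ range (n + 1)) : b ^ i * a ^ (n - i) ≤ a ^ n + b ^ n := by
    calc b ^ i * a ^ (n - i) ≤ |b| ^ i * |a| ^ (n - i) := by
          rw [← abs_pow, ← abs_pow, ← abs_mul]; exact le_abs_self _
      _ ≤ |b| ^ n + |a| ^ n := pow_mul_pow_le_pow_add_pow (abs_nonneg b) (abs_nonneg a)
          (Nat.lt_succ_iff.mp (mem_range.mp hi))
      _ = a ^ n + b ^ n := by rw [hn.pow_abs, hn.pow_abs, add_comm]
  calc ∑ i ∈ range (n + 1), b ^ i * a ^ (n - i) ≤ ∑ _i ∈ range (n + 1), (a ^ n + b ^ n) :=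
        sum_le_sum hterm
    _ = (n + 1) * (a ^ n + b ^ n) := by simp [mul_add]

lemma min_div_mul_add_le {u A v : ℝ} (hA : 0 < A) (hv : 0 ≤ v) :
    min (u / A) 1 * (A + v) ≤ u + v := by
  rw [mul_add]
  gcongr
  · exact (mul_le_mul_of_nonneg_right (min_le_left _ _) hA.le).trans_eq (div_mul_cancel₀ u hA.ne')
  · exact mul_le_of_le_one_left hv (min_le_right _ _)

lemma add_le_max_div_mul_add {u A v : ℝ} (hA : 0 < A) (hv : 0 ≤ v) :
    u + v ≤ max (u / A) 1 * (A + v) := by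
  rw [mul_add]
  gcongr
  · exact (div_mul_cancel₀ u hA.ne').symm.trans_le
      (mul_le_mul_of_nonneg_right (le_max_left _ _) hA.le)
  · exact le_mul_of_one_le_left hv (le_max_right _ _)

/-- The paper's `F(ξ, x)` for the exponent `n = 2p` (note the argument order). -/
noncomputable def powIntegral (n : ℕ) (x ξ : ℝ) : ℝ :=
  (n + 1) * ∫ s in (0:ℝ)..1, (x + s * ξ) ^ n

lemma powIntegral_two_mul (p : ℕ) (x ξ : ℝ) :
    powIntegral (2 * p) x ξ = (2 * p + 1 : ℝ) * ∫ s in (0:ℝ)..1, (x + s * ξ) ^ (2 * p) := by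
  simp [powIntegral]

lemma powIntegral_eq_geom_sum (n : ℕ) (x ξ : ℝ) :
    powIntegral n x ξ = ∑ i ∈ range (n + 1), (x + ξ) ^ i * x ^ (n - i) := by
  rw [powIntegral]
  rcases eq_or_ne ξ 0 with rfl | hξ
  · have (i) (hi : i ∈ range (n + 1)) : x ^ i * x ^ (n - i) = x ^ n := by
      rw [← pow_add, Nat.add_sub_cancel' (Nat.lt_succ_iff.mp (mem_range.mp hi))]
    simp [sum_congr rfl this]
  · have key := geom_sum₂_mul (x + ξ) x (n + 1)
    simp only [add_tsub_cancel_right, add_sub_cancel_left] at key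
    have hshift : ∫ s in (0:ℝ)..1, (x + s * ξ) ^ n = ∫ s in (0:ℝ)..1, (ξ * s + x) ^ n := by
      simp only [mul_comm, add_comm]
    rw [hshift, intervalIntegral.integral_comp_mul_add (· ^ n) hξ, integral_pow, mul_one,
      mul_zero, zero_add, add_comm ξ x, ← key, smul_eq_mul]
    field_simp

lemma Even.pow_add_pow_le_mul_powIntegral {n : ℕ} (hn : Even n) (x ξ : ℝ) :
    x ^ n + ξ ^ n ≤ (n + 1) * 2 ^ (n + 2) * powIntegral n x ξ := by
  have hS := hn.pow_add_pow_le_two_mul_geom_sum x (x + ξ)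
  rw [← powIntegral_eq_geom_sum] at hS
  have hshift := hn.pow_add_add_pow_le (-x) (x + ξ)
  rw [hn.neg_pow, neg_add_cancel_left] at hshift
  have hn1 : (1 : ℝ) ≤ n + 1 := le_add_of_nonneg_left n.cast_nonneg
  have hI : 0 ≤ powIntegral n x ξ := by linarith [hn.pow_nonneg x, hn.pow_nonneg (x + ξ)]
  calc x ^ n + ξ ^ n ≤ 2 ^ (n + 1) * (2 * powIntegral n x ξ) := by
        linarith [mul_le_mul_of_nonneg_left hS (pow_nonneg zero_le_two (n + 1))]
    _ = 1 * 2 ^ (n + 2) * powIntegral n x ξ := by ring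
    _ ≤ (n + 1) * 2 ^ (n + 2) * powIntegral n x ξ := by gcongr

lemma Even.powIntegral_le_mul_pow_add_pow {n : ℕ} (hn : Even n) (x ξ : ℝ) :
    powIntegral n x ξ ≤ (n + 1) * 2 ^ (n + 2) * (x ^ n + ξ ^ n) := by
  have hH : 0 ≤ x ^ n + ξ ^ n := add_nonneg (hn.pow_nonneg x) (hn.pow_nonneg ξ)
  calc powIntegral n x ξ ≤ (n + 1) * (x ^ n + (x + ξ) ^ n) := by
        rw [powIntegral_eq_geom_sum]; exact hn.geom_sum_le_mul_pow_add_pow x (x + ξ)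
    _ ≤ (n + 1) * (2 ^ (n + 1) * (x ^ n + ξ ^ n)) := by gcongr; exact hn.pow_add_add_pow_le x ξ
    _ ≤ (n + 1) * 2 ^ (n + 2) * (x ^ n + ξ ^ n) := by
        rw [← mul_assoc]; gcongr _ * ?_ * _
        exact pow_le_pow_right₀ one_le_two (by omega)

lemma Even.powIntegral_pos {n : ℕ} (hn : Even n) {x : ℝ} (hx : x ≠ 0) (ξ : ℝ) :
    0 < powIntegral n x ξ := by
  have h := hn.pow_add_pow_le_mul_powIntegral x ξ
  have : 0 < x ^ n + ξ ^ n := add_pos_of_pos_of_nonneg (hn.pow_pos hx) (hn.pow_nonneg ξ)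
  exact pos_of_mul_pos_right (this.trans_le h) (by positivity)

lemma Even.mul_powIntegral_le_powIntegral {n : ℕ} (hn : Even n) {α : ℝ} (hα : α ≠ 0) (ξ : ℝ)
    {δ x : ℝ} (hδ : 0 ≤ δ) (hx : δ ≤ |x|) :
    min (δ ^ n / α ^ n) 1 / ((n + 1) * 2 ^ (n + 2)) ^ 2 * powIntegral n α ξ ≤
      powIntegral n x ξ := by
  set C : ℝ := (n + 1) * 2 ^ (n + 2)
  have hC : 0 < C := by positivity
  have hδx : δ ^ n + ξ ^ n ≤ x ^ n + ξ ^ n :=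
    add_le_add (hn.pow_le_pow_of_abs_le (by rwa [abs_of_nonneg hδ])) le_rfl
  calc min (δ ^ n / α ^ n) 1 / C ^ 2 * powIntegral n α ξ
      ≤ min (δ ^ n / α ^ n) 1 / C ^ 2 * (C * (α ^ n + ξ ^ n)) := by
        gcongr
        · exact div_nonneg (le_min (div_nonneg (hn.pow_nonneg δ) (hn.pow_nonneg α)) zero_le_one)
            (sq_nonneg C)
        · exact hn.powIntegral_le_mul_pow_add_pow α ξ
    _ = min (δ ^ n / α ^ n) 1 * (α ^ n + ξ ^ n) / C := by field_simp
    _ ≤ (x ^ n + ξ ^ n) / C := by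
        gcongr
        exact (min_div_mul_add_le (hn.pow_pos hα) (hn.pow_nonneg ξ)).trans hδx
    _ ≤ powIntegral n x ξ := by
        rw [div_le_iff₀ hC, mul_comm]; exact hn.pow_add_pow_le_mul_powIntegral x ξ

lemma Even.powIntegral_le_mul_powIntegral {n : ℕ} (hn : Even n) {α : ℝ} (hα : α ≠ 0) (ξ : ℝ)
    {M x : ℝ} (hx : |x| ≤ M) :
    powIntegral n x ξ ≤
      ((n + 1) * 2 ^ (n + 2)) ^ 2 * max (M ^ n / α ^ n) 1 * powIntegral n α ξ := by
  set C : ℝ := (n + 1) * 2 ^ (n + 2)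
  have hxM : x ^ n + ξ ^ n ≤ M ^ n + ξ ^ n :=
    add_le_add (hn.pow_le_pow_of_abs_le (hx.trans (le_abs_self M))) le_rfl
  calc powIntegral n x ξ ≤ C * (x ^ n + ξ ^ n) := hn.powIntegral_le_mul_pow_add_pow x ξ
    _ ≤ C * (max (M ^ n / α ^ n) 1 * (α ^ n + ξ ^ n)) := by
        gcongr
        exact hxM.trans (add_le_max_div_mul_add (hn.pow_pos hα) (hn.pow_nonneg ξ))
    _ ≤ C * (max (M ^ n / α ^ n) 1 * (C * powIntegral n α ξ)) := by
        gcongr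
        exact hn.pow_add_pow_le_mul_powIntegral α ξ
    _ = C ^ 2 * max (M ^ n / α ^ n) 1 * powIntegral n α ξ := by ring

theorem stmt_3_general (p : ℕ) (α : ℝ) (hα : α ≠ 0)
    (x₀ : ℝ → ℝ)
    (δ : ℝ) (hδ : 0 < δ) (hlow : ∀ t, δ ≤ |x₀ t|)
    (M : ℝ) (hup : ∀ t, |x₀ t| ≤ M) :
    ∃ R₁ R₂ : ℝ, 0 < R₁ ∧ 0 < R₂ ∧ ∀ ξ t : ℝ,
      R₁ < ((2 * p + 1 : ℝ) * ∫ s in (0:ℝ)..1, (x₀ t + s * ξ) ^ (2 * p)) /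
            ((2 * p + 1 : ℝ) * ∫ s in (0:ℝ)..1, (α + s * ξ) ^ (2 * p)) ∧
      ((2 * p + 1 : ℝ) * ∫ s in (0:ℝ)..1, (x₀ t + s * ξ) ^ (2 * p)) /
            ((2 * p + 1 : ℝ) * ∫ s in (0:ℝ)..1, (α + s * ξ) ^ (2 * p)) < R₂ := by
  have hn : Even (2 * p) := even_two_mul p
  set C : ℝ := (((2 * p : ℕ) : ℝ) + 1) * 2 ^ (2 * p + 2)
  set r := min (δ ^ (2 * p) / α ^ (2 * p)) 1 / C ^ 2
  set K := C ^ 2 * max (M ^ (2 * p) / α ^ (2 * p)) 1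
  have hr : 0 < r :=
    div_pos (lt_min (div_pos (pow_pos hδ _) (hn.pow_pos hα)) one_pos) (by positivity)
  have hK : 0 < K := by positivity
  refine ⟨r / 2, 2 * K, half_pos hr, by positivity, fun ξ t => ?_⟩
  simp only [← powIntegral_two_mul]
  have hI := hn.powIntegral_pos hα ξ
  rw [lt_div_iff₀ hI, div_lt_iff₀ hI]
  exact ⟨(mul_lt_mul_of_pos_right (half_lt_self hr) hI).trans_le
      (hn.mul_powIntegral_le_powIntegral hα ξ hδ.le (hlow t)),
    (hn.powIntegral_le_mul_powIntegral hα ξ (hup t)).trans_lt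
      (mul_lt_mul_of_pos_right (lt_two_mul_self hK) hI)⟩

theorem stmt_3 (p : ℕ) (hp : 1 ≤ p) (α : ℝ) (hα : α ≠ 0)
    (x₀ : ℝ → ℝ) (hcont : Continuous x₀)
    (δ : ℝ) (hδ : 0 < δ) (hlow : ∀ t, δ ≤ |x₀ t|)
    (M : ℝ) (hup : ∀ t, |x₀ t| ≤ M) :
    ∃ R₁ R₂ : ℝ, 0 < R₁ ∧ 0 < R₂ ∧ ∀ ξ t : ℝ,
      R₁ < ((2 * p + 1 : ℝ) * ∫ s in (0:ℝ)..1, (x₀ t + s * ξ) ^ (2 * p)) /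
            ((2 * p + 1 : ℝ) * ∫ s in (0:ℝ)..1, (α + s * ξ) ^ (2 * p)) ∧
      ((2 * p + 1 : ℝ) * ∫ s in (0:ℝ)..1, (x₀ t + s * ξ) ^ (2 * p)) /
            ((2 * p + 1 : ℝ) * ∫ s in (0:ℝ)..1, (α + s * ξ) ^ (2 * p)) < R₂ :=
  stmt_3_general p α hα x₀ δ hδ hlow M hup
end

section
/- Let p ≥ 1 be an integer, F > 0, γ > 0 with γ² ≥ 8pF^{2p−1}, and λ₁ = (γ/(4pF^{2p−1}))(1 + √(1 − 8pF^{2p−1}/γ²)). Then for all x ∈ [0,F] one has (F^{2p} − x^{2p})·(λ₁(γ − 2pλ₁x^{2p−1}) − 1) ≥ 0. -/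
/-!
The number λ₁ is the larger root of `2p F^{2p-1} λ² - γ λ + 1 = 0`, i.e. `λ₁ (γ - 2p λ₁ F^{2p-1}) = 1`.
The factor `λ₁ (γ - 2p λ₁ x^{2p-1}) - 1` is nonincreasing in `x ≥ 0`, so on `[0, F]` it is
smallest at `x = F`, where it vanishes; the factor `F^{2p} - x^{2p}` is nonnegative there as well.
-/

open Real

theorem quadratic_root_mul_sub_eq_one {c γ : ℝ} (hc : c ≠ 0) (hγ : γ ≠ 0) (h : 4 * c ≤ γ ^ 2) :
    γ / (2 * c) * (1 + √(1 - 4 * c / γ ^ 2)) *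
      (γ - c * (γ / (2 * c) * (1 + √(1 - 4 * c / γ ^ 2)))) = 1 := by
  have hdisc : 0 ≤ 1 - 4 * c / γ ^ 2 := by
    rw [sub_nonneg, div_le_one (by positivity)]
    exact h
  have hsq : γ ^ 2 * √(1 - 4 * c / γ ^ 2) ^ 2 = γ ^ 2 - 4 * c := by
    rw [sq_sqrt hdisc]
    field_simp
  -- keeps `field_simp` from rewriting under the square root
  generalize √(1 - 4 * c / γ ^ 2) = s at hsq ⊢
  field_simp
  linear_combination (-1 : ℝ) * hsq

theorem one_le_mul_sub_mul_of_le {l b γ t T : ℝ} (hb : 0 ≤ b) (htT : t ≤ T)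
    (hT : l * (γ - b * l * T) = 1) : 1 ≤ l * (γ - b * l * t) :=
  calc 1 = l * (γ - b * l * T) := hT.symm
    _ ≤ l * (γ - b * l * T) + b * l ^ 2 * (T - t) :=
        le_add_of_nonneg_right (by have := sub_nonneg.2 htT; positivity)
    _ = l * (γ - b * l * t) := by ring

theorem stmt_10 (p : ℕ) (hp : 1 ≤ p) (F γ : ℝ) (hF : 0 < F) (hγ : 0 < γ)
    (hγ2 : 8 * p * F ^ (2 * p - 1) ≤ γ ^ 2) :
    ∀ x ∈ Set.Icc (0:ℝ) F,
      0 ≤ (F ^ (2 * p) - x ^ (2 * p)) *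
        ((γ / (4 * p * F ^ (2 * p - 1)) *
          (1 + Real.sqrt (1 - 8 * p * F ^ (2 * p - 1) / γ ^ 2))) *
          (γ - 2 * p * (γ / (4 * p * F ^ (2 * p - 1)) *
            (1 + Real.sqrt (1 - 8 * p * F ^ (2 * p - 1) / γ ^ 2))) *
            x ^ (2 * p - 1)) - 1) := by
  rintro x ⟨hx0, hxF⟩
  set q := 2 * p - 1
  have hc : (2 * p * F ^ q : ℝ) ≠ 0 := by
    have : (0 : ℝ) < p := by exact_mod_cast hp
    positivity
  have hroot := quadratic_root_mul_sub_eq_one hc hγ.ne' (by linarith)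
  rw [show (2 : ℝ) * (2 * p * F ^ q) = 4 * p * F ^ q by ring,
    show (4 : ℝ) * (2 * p * F ^ q) = 8 * p * F ^ q by ring] at hroot
  refine mul_nonneg (sub_nonneg.2 (pow_le_pow_left₀ hx0 hxF _)) (sub_nonneg.2 ?_)
  exact one_le_mul_sub_mul_of_le (by positivity) (pow_le_pow_left₀ hx0 hxF q)
    (by linear_combination hroot)
end

section
/- Let p ≥ 1 be an integer and F > f > 0, γ > 0. Define h(x) = 2p·x^{2p−1}·(F^{2p} − x^{2p}) − γ²·(F^{2p} − f^{2p}). Then h has exactly one real root in the interval (−∞, −F), and h(x) ≥ 0 for all x less than or equal to that root. -/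
theorem stmt_12 (p : ℕ) (hp : 1 ≤ p) (F f γ : ℝ) (hf : 0 < f) (hFf : f < F)
    (hγ : 0 < γ) :
    ∃ r : ℝ, r < -F ∧
      (2 * p * r ^ (2 * p - 1) * (F ^ (2 * p) - r ^ (2 * p)) -
        γ ^ 2 * (F ^ (2 * p) - f ^ (2 * p)) = 0) ∧
      (∀ x : ℝ, x < -F →
        2 * p * x ^ (2 * p - 1) * (F ^ (2 * p) - x ^ (2 * p)) -
          γ ^ 2 * (F ^ (2 * p) - f ^ (2 * p)) = 0 → x = r) ∧
      ∀ x : ℝ, x ≤ r →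
        0 ≤ 2 * p * x ^ (2 * p - 1) * (F ^ (2 * p) - x ^ (2 * p)) -
          γ ^ 2 * (F ^ (2 * p) - f ^ (2 * p)) := by
  have hF0 : 0 < F := hf.trans hFf
  have hodd : Odd (2 * p - 1) := ⟨p - 1, by omega⟩
  have heven : Even (2 * p) := ⟨p, by ring⟩
  set c : ℝ := γ ^ 2 * (F ^ (2 * p) - f ^ (2 * p)) with hc
  have hc0 : 0 < c := by
    apply mul_pos (pow_pos hγ 2)
    have : f ^ (2 * p) < F ^ (2 * p) := pow_lt_pow_left₀ hFf hf.le (by omega)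
    linarith
  set φ : ℝ → ℝ := fun t => 2 * p * t ^ (2 * p - 1) * (t ^ (2 * p) - F ^ (2 * p)) with hφ
  have hkey : ∀ x : ℝ, 2 * p * x ^ (2 * p - 1) * (F ^ (2 * p) - x ^ (2 * p)) = φ (-x) := by
    intro x
    simp only [hφ]
    rw [hodd.neg_pow, heven.neg_pow]
    ring
  have hcont : Continuous φ := by fun_prop
  have hmono : StrictMonoOn φ (Set.Ici F) := by
    intro a ha b hb hab
    simp only [hφ]
    have ha0 : 0 < a := hF0.trans_le ha
    have hb0 : 0 < b := hF0.trans_le hb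
    have h1 : a ^ (2 * p - 1) ≤ b ^ (2 * p - 1) := pow_le_pow_left₀ ha0.le hab.le _
    have h2 : a ^ (2 * p) < b ^ (2 * p) := pow_lt_pow_left₀ hab ha0.le (by omega)
    have h3 : F ^ (2 * p) ≤ a ^ (2 * p) := pow_le_pow_left₀ hF0.le ha _
    have h4 : 0 < b ^ (2 * p - 1) := pow_pos hb0 _
    have hp0 : (1:ℝ) ≤ (p : ℝ) := by exact_mod_cast hp
    nlinarith [mul_le_mul_of_nonneg_right h1 (by linarith : (0:ℝ) ≤ a ^ (2 * p) - F ^ (2 * p)),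
      mul_lt_mul_of_pos_left (sub_lt_sub_right h2 (F ^ (2 * p))) h4]
  have hφF : φ F = 0 := by simp [hφ]
  set T : ℝ := F + c + 1 with hT
  have hFT : F ≤ T := by linarith
  have hT1 : (1:ℝ) ≤ T := by linarith
  have hφT : c < φ T := by
    have h1 : (1:ℝ) ≤ T ^ (2 * p - 1) := one_le_pow₀ hT1
    have h2 : F ^ (2 * p) ≤ F * T ^ (2 * p - 1) := by
      have : F ^ (2 * p) = F * F ^ (2 * p - 1) := by
        rw [← pow_succ']; congr 1; omega
      rw [this]
      exact mul_le_mul_of_nonneg_left (pow_le_pow_left₀ hF0.le hFT _) hF0.le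
    have h3 : T ^ (2 * p) = T * T ^ (2 * p - 1) := by
      rw [← pow_succ']; congr 1; omega
    have h4 : T ^ (2 * p) - F ^ (2 * p) ≥ (c + 1) * T ^ (2 * p - 1) := by
      rw [h3]; nlinarith
    have hp0 : (1:ℝ) ≤ (p : ℝ) := by exact_mod_cast hp
    have h5 : (c + 1) * T ^ (2 * p - 1) ≥ c + 1 := by nlinarith
    have h6 : (1:ℝ) ≤ 2 * p * T ^ (2 * p - 1) := by nlinarith
    have h7 := mul_le_mul h6 (show c + 1 ≤ T ^ (2 * p) - F ^ (2 * p) by linarith)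
      (by linarith) (by linarith)
    simp only [hφ]
    nlinarith
  obtain ⟨t, ht, hφt⟩ : ∃ t ∈ Set.Icc F T, φ t = c := by
    have := intermediate_value_Icc hFT hcont.continuousOn
    have hmem : c ∈ Set.Icc (φ F) (φ T) := ⟨by rw [hφF]; exact hc0.le, hφT.le⟩
    exact this hmem
  have htF : F < t := by
    rcases lt_or_eq_of_le ht.1 with h | h
    · exact h
    · exfalso; rw [← h, hφF] at hφt; linarith
  refine ⟨-t, by linarith, ?_, ?_, ?_⟩
  · rw [hkey]; simp [hφt]
  · intro x hx heq
    rw [hkey] at heq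
    have hx' : -x ∈ Set.Ici F := by simp; linarith
    have ht' : t ∈ Set.Ici F := htF.le
    have : -x = t := hmono.injOn hx' ht' (by rw [hφt]; linarith)
    linarith
  · intro x hx
    rw [hkey]
    have hx' : t ≤ -x := by linarith
    rcases eq_or_lt_of_le hx' with h | h
    · rw [← h, hφt]; linarith
    · have := hmono htF.le (htF.le.trans hx' : -x ∈ Set.Ici F) h
      rw [hφt] at this; linarith
end

section
/- Let p ≥ 1 be an integer, F > 0, X₀ > F, γ > 0. Then there exists b₀ > 0 such that for all 0 < b ≤ b₀ and all v ≥ 0, L(v) := (X₀ + v²)^{2p} − F^{2p} − b·v³·(3bv/2 + γ) ≥ 0. -/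
theorem stmt_15 (p : ℕ) (hp : 1 ≤ p) (F X₀ γ : ℝ) (hF : 0 < F) (hX₀ : F < X₀)
    (hγ : 0 < γ) :
    ∃ b₀ : ℝ, 0 < b₀ ∧ ∀ b : ℝ, 0 < b → b ≤ b₀ → ∀ v : ℝ, 0 ≤ v →
      0 ≤ (X₀ + v ^ 2) ^ (2 * p) - F ^ (2 * p) -
        b * v ^ 3 * (3 * b * v / 2 + γ) := by
  set c : ℝ := (F ^ 2) ^ (p - 1) with hc
  have hcp : 0 < c := by positivity
  have hX₀pos : 0 < X₀ := lt_trans hF hX₀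
  refine ⟨min 1 (min (c / 2) (2 * c ^ 2 * X₀ / γ ^ 2)), by positivity, ?_⟩
  intro b hb hble v hv
  have hb1 : b ≤ 1 := le_trans hble (min_le_left _ _)
  have hb2 : b ≤ c / 2 := le_trans hble ((min_le_right _ _).trans (min_le_left _ _))
  have hb3 : b ≤ 2 * c ^ 2 * X₀ / γ ^ 2 :=
    le_trans hble ((min_le_right _ _).trans (min_le_right _ _))
  have hbsq : b ^ 2 ≤ b := by nlinarith
  -- key inequality
  have hx : F ^ 2 ≤ (X₀ + v ^ 2) ^ 2 := by nlinarith
  have key : c * ((X₀ + v ^ 2) ^ 2 - F ^ 2) ≤ (X₀ + v ^ 2) ^ (2 * p) - F ^ (2 * p) := by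
    have h1 : (X₀ + v ^ 2) ^ (2 * p) = ((X₀ + v ^ 2) ^ 2) ^ p := by
      rw [← pow_mul]
    have h2 : F ^ (2 * p) = (F ^ 2) ^ p := by rw [← pow_mul]
    rw [h1, h2]
    have hF2 : (0:ℝ) ≤ F ^ 2 := by positivity
    have hmono : c * (X₀ + v ^ 2) ^ 2 ≤ ((X₀ + v ^ 2) ^ 2) ^ p := by
      calc c * (X₀ + v ^ 2) ^ 2 ≤ ((X₀ + v ^ 2) ^ 2) ^ (p - 1) * (X₀ + v ^ 2) ^ 2 := by
            apply mul_le_mul_of_nonneg_right _ (by positivity)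
            exact pow_le_pow_left₀ hF2 hx _
        _ = ((X₀ + v ^ 2) ^ 2) ^ p := by
            rw [← pow_succ]
            congr 1
            omega
    have hcF : c * F ^ 2 = (F ^ 2) ^ p := by
      rw [hc, ← pow_succ]
      congr 1
      omega
    nlinarith
  have hbc2 : b ^ 2 * γ ^ 2 ≤ 2 * c ^ 2 * X₀ := by
    rw [le_div_iff₀ (by positivity)] at hb3
    nlinarith
  have hbc1 : b ^ 2 ≤ c / 2 := le_trans hbsq hb2
  have hv4 : (0:ℝ) ≤ v ^ 4 := by positivity
  have hv2 : (0:ℝ) ≤ v ^ 2 := by positivity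
  have main : 0 ≤ c * (c * ((X₀ + v ^ 2) ^ 2 - F ^ 2) - b * v ^ 3 * (3 * b * v / 2 + γ)) := by
    nlinarith [sq_nonneg (c * v ^ 2 - 2 * γ * b * v),
      mul_le_mul_of_nonneg_right hbc2 hv2,
      mul_le_mul_of_nonneg_right (mul_le_mul_of_nonneg_right hbc1 hv4) hcp.le,
      mul_pos (mul_pos hcp hcp) hX₀pos, mul_pos hcp hcp,
      mul_le_mul_of_nonneg_left (show F ^ 2 ≤ X₀ ^ 2 by nlinarith) (mul_pos hcp hcp).le,
      mul_nonneg (mul_pos hcp hX₀pos).le hv2]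
  have main2 : 0 ≤ c * ((X₀ + v ^ 2) ^ 2 - F ^ 2) - b * v ^ 3 * (3 * b * v / 2 + γ) :=
    (mul_nonneg_iff_of_pos_left hcp).mp main
  linarith [key]
end
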